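/- Every element of Λ²₇ can be written uniquely in the form λ·ω + a∧dt + χ₆(a), where λ ∈ ℝ and a is a 1-form on ℝ⁶ (forms on ℝ⁶ being regarded as forms on ℝ⁷ via the projection ℝ⁷ → ℝ⁶ that forgets the t-coordinate); conversely every form λ·ω + a∧dt + χ₆(a) lies in Λ²₇. -/

import Mathlib

/- STATEMENT 5: every element of Λ²₇ can be written uniquely as λ·ω + a∧dt + χ₆(a) with
λ ∈ ℝ and a a 1-form on ℝ⁶ (regarded on ℝ⁷ via the projection forgetting t); conversely
every such form lies in Λ²₇.

We identify duals with the underlying spaces via the standard bases, so forms are elements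
of the exterior algebras of `V6 = Fin 6 → ℝ` and `V7 = Fin 7 → ℝ` (wedge = multiplication).
Coordinates on ℝ⁷: `t = ε 0, x₁ = ε 1, …, y₃ = ε 6`; on ℝ⁶: `x₁ = ε6 0, …, y₃ = ε6 5`.
`P : E6 →ₐ E7` is "regard a form on ℝ⁶ as a form on ℝ⁷"; a 1-form `a` on ℝ⁶ is `ι ℝ w`
for a unique coefficient vector `w : V6`.  `χ₆` is any linear map with the defining
property `χ₆(ι_vω) = ι_vρ` for all `v ∈ ℝ⁶`. -/

noncomputable section
open ExteriorAlgebra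

abbrev V6 : Type := Fin 6 → ℝ
abbrev E6 : Type := ExteriorAlgebra ℝ V6
abbrev V7 : Type := Fin 7 → ℝ
abbrev E7 : Type := ExteriorAlgebra ℝ V7

def ε6 (i : Fin 6) : E6 := ExteriorAlgebra.ι ℝ (Pi.single i 1)
def ε (i : Fin 7) : E7 := ExteriorAlgebra.ι ℝ (Pi.single i 1)

/-- Contraction (interior product) `ι_v`, in the first slot. -/
def ctr6 (v : V6) : E6 →ₗ[ℝ] E6 :=
  CliffordAlgebra.contractLeft ((Pi.basisFun ℝ (Fin 6)).toDual v)
def ctr (v : V7) : E7 →ₗ[ℝ] E7 :=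
  CliffordAlgebra.contractLeft ((Pi.basisFun ℝ (Fin 7)).toDual v)

def ω6 : E6 := ε6 0 * ε6 1 + ε6 2 * ε6 3 + ε6 4 * ε6 5
def ρ6 : E6 := -(ε6 1 * ε6 3 * ε6 5) + ε6 1 * ε6 2 * ε6 4 + ε6 0 * ε6 3 * ε6 4 + ε6 0 * ε6 2 * ε6 5

/-- The inclusion of the dual coordinates of ℝ⁶ into those of ℝ⁷ (dual to the projection
ℝ⁷ → ℝ⁶ forgetting the t-coordinate, which has index 0). -/
def incl : V6 →ₗ[ℝ] V7 where
  toFun v := Fin.cons 0 v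
  map_add' u v := by
    ext i
    refine Fin.cases ?_ (fun j => ?_) i <;> simp
  map_smul' c v := by
    ext i
    refine Fin.cases ?_ (fun j => ?_) i <;> simp

/-- Pullback of (constant-coefficient) forms on ℝ⁶ to forms on ℝ⁷ via the projection
forgetting t. -/
def P : E6 →ₐ[ℝ] E7 :=
  ExteriorAlgebra.lift ℝ ⟨(ExteriorAlgebra.ι ℝ).comp incl, fun _ =>
    ExteriorAlgebra.ι_sq_zero _⟩

/-- `φ₀ = ω∧dt + ρ`. -/
def φ₀ : E7 := P ω6 * ε 0 + P ρ6

/-- The linear map `v ↦ ι_vφ₀` on ℝ⁷. -/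
def iotaPhi : V7 →ₗ[ℝ] E7 :=
  ((CliffordAlgebra.contractLeft (Q := (0 : QuadraticForm ℝ V7))).flip φ₀) ∘ₗ
    (Pi.basisFun ℝ (Fin 7)).toDual

/-- `Λ²₇ = {ι_vφ₀ : v ∈ ℝ⁷}`. -/
def Λ27 : Submodule ℝ E7 := LinearMap.range iotaPhi

/-!
Writing `v = (v₀, u) ∈ ℝ ⊕ ℝ⁶`, contraction commutes with pullback along the projection and
`dt` commutes with the even form `ω`, so `ι_vφ₀ = v₀ω + (ι_uω)∧dt + ι_uρ`. The map
`u ↦ ι_uω` is, in coordinates, `omegaFlat`, which squares to `-1`; hence the defining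
property of `χ₆` turns `λω + a∧dt + χ₆(a)` into `ι_vφ₀` with `v = (λ, -omegaFlat a)`.
This gives the converse and existence; uniqueness is injectivity of `v ↦ ι_vφ₀`, seen by
contracting with `∂_t` (which recovers `ι_uω`) and then using `ω ≠ 0`.
-/

theorem Pi.basisFun_toDual_apply {R n : Type*} [CommSemiring R] [Fintype n] [DecidableEq n]
    (v w : n → R) : (Pi.basisFun R n).toDual v w = v ⬝ᵥ w := by
  conv_lhs => rw [← (Pi.basisFun R n).sum_repr w]
  simp only [map_sum, map_smul, Module.Basis.toDual_apply_left, Pi.basisFun_repr, smul_eq_mul,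
    dotProduct, mul_comm]

namespace ExteriorAlgebra

variable {R M N : Type*} [CommRing R] [AddCommGroup M] [Module R M] [AddCommGroup N] [Module R N]

theorem contractLeft_ι_mul_ι (d : Module.Dual R M) (a b : M) :
    CliffordAlgebra.contractLeft d (ι R a * ι R b) = ι R (d a • b - d b • a) := by
  rw [ι, CliffordAlgebra.contractLeft_ι_mul, CliffordAlgebra.contractLeft_ι, map_sub, map_smul,
    map_smul, ← Algebra.commutes, ← Algebra.smul_def]

theorem contractLeft_map (f : M →ₗ[R] N) (d : Module.Dual R N) (x : ExteriorAlgebra R M) :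
    CliffordAlgebra.contractLeft d (map f x) = map f (CliffordAlgebra.contractLeft (d ∘ₗ f) x) := by
  induction x using CliffordAlgebra.left_induction with
  | algebraMap r => simp [CliffordAlgebra.contractLeft_algebraMap]
  | add x y hx hy => simp only [map_add, hx, hy]
  | ι_mul x m hx =>
    simp only [map_mul, map_apply_ι, ι, CliffordAlgebra.contractLeft_ι_mul, map_sub, map_smul, hx]
    rfl

theorem commute_ι_ι_mul_ι (a b c : M) : Commute (ι R a) (ι R b * ι R c) := by
  have hab := eq_neg_of_add_eq_zero_left (ι_add_mul_swap (R := R) a b)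
  have hac := eq_neg_of_add_eq_zero_left (ι_add_mul_swap (R := R) a c)
  rw [Commute, SemiconjBy, ← mul_assoc, hab, neg_mul, mul_assoc, hac, mul_neg, neg_neg, mul_assoc]

end ExteriorAlgebra

theorem ctr_ι_mul (v x : V7) (b : E7) : ctr v (ι ℝ x * b) = (v ⬝ᵥ x) • b - ι ℝ x * ctr v b := by
  rw [ctr, ι, CliffordAlgebra.contractLeft_ι_mul, Pi.basisFun_toDual_apply]

theorem ctr_ι (v x : V7) : ctr v (ι ℝ x) = algebraMap ℝ E7 (v ⬝ᵥ x) := by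
  rw [ctr, ι, CliffordAlgebra.contractLeft_ι, Pi.basisFun_toDual_apply]

theorem P_eq_map : P = map incl :=
  hom_ext <| LinearMap.ext fun w => by simp [P]

theorem P_ι (w : V6) : P (ι ℝ w) = ι ℝ (incl w) := by
  rw [P_eq_map, map_apply_ι]

theorem toDual_comp_incl (v : V7) :
    (Pi.basisFun ℝ (Fin 7)).toDual v ∘ₗ incl = (Pi.basisFun ℝ (Fin 6)).toDual (Fin.tail v) := by
  ext w
  simp [Pi.basisFun_toDual_apply, incl, dotProduct, Fin.sum_univ_succ, Fin.tail]

theorem ctr_P (v : V7) (x : E6) : ctr v (P x) = P (ctr6 (Fin.tail v) x) := by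
  rw [P_eq_map, ctr, ctr6, contractLeft_map, toDual_comp_incl]

theorem ctr_single_zero_P (x : E6) : ctr (Pi.single 0 1) (P x) = 0 := by
  have h : Fin.tail (Pi.single 0 1 : V7) = 0 := by ext; simp [Fin.tail]
  rw [ctr_P, h, ctr6, map_zero, map_zero, LinearMap.zero_apply, map_zero]

def omegaFlat : V6 →ₗ[ℝ] V6 where
  toFun u := ![-u 1, u 0, -u 3, u 2, -u 5, u 4]
  map_add' u v := by ext i; fin_cases i <;> simp [add_comm]
  map_smul' c u := by ext i; fin_cases i <;> simp

theorem omegaFlat_omegaFlat (u : V6) : omegaFlat (omegaFlat u) = -u := by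
  ext i; fin_cases i <;> simp [omegaFlat]

theorem ctr6_ω6 (u : V6) : ctr6 u ω6 = ι ℝ (omegaFlat u) := by
  simp_rw [ω6, ε6, ctr6, map_add, contractLeft_ι_mul_ι, Pi.basisFun_toDual_apply,
    dotProduct_single, mul_one, ← map_add]
  congr 1
  ext i; fin_cases i <;> simp [omegaFlat]

theorem ι_eq_ctr6_ω6 (w : V6) : ι ℝ w = ctr6 (-omegaFlat w) ω6 := by
  rw [ctr6_ω6, map_neg, omegaFlat_omegaFlat, neg_neg]

theorem commute_ε_zero_P_ω6 : Commute (ε 0) (P ω6) := by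
  simp only [ω6, ε6, ε, map_add, map_mul, P_ι]
  exact ((commute_ι_ι_mul_ι _ _ _).add_right (commute_ι_ι_mul_ι _ _ _)).add_right
    (commute_ι_ι_mul_ι _ _ _)

theorem P_ω6_ne_zero : P ω6 ≠ 0 := by
  intro h
  have h1 := congrArg (ctr (Pi.single 1 1)) h
  rw [ctr_P, ctr6_ω6, P_ι, map_zero, ι_eq_zero_iff] at h1
  simpa [incl, omegaFlat, Fin.tail] using congrFun h1 2

theorem iotaPhi_eq (v : V7) : iotaPhi v =
    v 0 • P ω6 + P (ι ℝ (omegaFlat (Fin.tail v))) * ε 0 + P (ctr6 (Fin.tail v) ρ6) := by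
  have hanti := eq_neg_of_add_eq_zero_left
    (ι_add_mul_swap (R := ℝ) (Pi.single 0 1 : V7) (incl (omegaFlat (Fin.tail v))))
  change ctr v φ₀ = _
  rw [φ₀, commute_ε_zero_P_ω6.eq.symm, map_add, ε, ctr_ι_mul, ctr_P, ctr_P, ctr6_ω6, P_ι,
    dotProduct_single, mul_one, hanti, sub_neg_eq_add]

theorem iotaPhi_injective : Function.Injective iotaPhi := by
  rw [← LinearMap.ker_eq_bot, LinearMap.ker_eq_bot']
  intro v hv
  have htail : Fin.tail v = 0 := by
    have h := congrArg (ctr (Pi.single 0 1)) hv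
    rw [iotaPhi_eq, map_add, map_add, map_smul, ctr_single_zero_P, ctr_single_zero_P, P_ι, ε,
      ctr_ι_mul, ctr_ι] at h
    have hincl : incl (omegaFlat (Fin.tail v)) = 0 := by simpa [incl] using h
    have hflat : omegaFlat (Fin.tail v) = 0 := funext fun i => congrFun hincl i.succ
    simpa [hflat] using (omegaFlat_omegaFlat (Fin.tail v)).symm
  have hv0 : v 0 = 0 := by
    rw [iotaPhi_eq, htail] at hv
    simpa [P_ω6_ne_zero, ctr6] using hv
  exact funext fun i => Fin.cases hv0 (congrFun htail) i

theorem stmt5 (χ₆ : E6 →ₗ[ℝ] E6) (hχ : ∀ v : V6, χ₆ (ctr6 v ω6) = ctr6 v ρ6) :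
    (∀ α ∈ Λ27, ∃! p : ℝ × V6,
      α = p.1 • P ω6 + P (ExteriorAlgebra.ι ℝ p.2) * ε 0 +
            P (χ₆ (ExteriorAlgebra.ι ℝ p.2))) ∧
    (∀ (l : ℝ) (w : V6),
      l • P ω6 + P (ExteriorAlgebra.ι ℝ w) * ε 0 + P (χ₆ (ExteriorAlgebra.ι ℝ w)) ∈ Λ27) := by
  have hform (l : ℝ) (w : V6) : l • P ω6 + P (ι ℝ w) * ε 0 + P (χ₆ (ι ℝ w)) =
      iotaPhi (Fin.cons l (-omegaFlat w)) := by
    have hχι : χ₆ (ι ℝ w) = ctr6 (-omegaFlat w) ρ6 := by rw [ι_eq_ctr6_ω6, hχ]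
    rw [iotaPhi_eq, Fin.cons_zero, Fin.tail_cons, map_neg, omegaFlat_omegaFlat, neg_neg, hχι]
  refine ⟨?_, fun l w => hform l w ▸ LinearMap.mem_range_self _ _⟩
  rintro α ⟨v, rfl⟩
  refine ⟨(v 0, omegaFlat (Fin.tail v)), ?_, ?_⟩
  · dsimp only
    rw [hform, omegaFlat_omegaFlat, neg_neg, Fin.cons_self_tail]
  · rintro ⟨l, w⟩ h
    rw [hform, iotaPhi_injective.eq_iff] at h
    rw [h, Fin.cons_zero, Fin.tail_cons, map_neg, omegaFlat_omegaFlat, neg_neg]
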